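/- In the tensor algebra T[A] on a free ℤ-module A with basis S of cardinality at least 2, any element that commutes with a fixed basis element a ∈ S lies in the subalgebra generated by a. -/

import Mathlib

/-! A basis of `M` identifies `T[M]` with the monoid algebra of the free monoid on `S`. If
`a x = x a`, then comparing coefficients at `c w aᵏ⁺¹` shows that the coefficient of `x` at
`c w aᵏ` equals its coefficient at `w aᵏ⁺¹` when `c = a` and vanishes otherwise; peeling off
letters from the left, every word in the support of `x` is a power of `a`. -/

open MonoidAlgebra

namespace MonoidAlgebra

theorem mem_adjoin_single_of_support_subset_range_pow {R M : Type*} [CommSemiring R] [Monoid M]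
    {g : M} {x : MonoidAlgebra R M} (hx : (x.coeff.support : Set M) ⊆ Set.range (g ^ ·)) :
    x ∈ Algebra.adjoin R {single g (1 : R)} := by
  refine Algebra.adjoin_le ?_ (mem_adjoin_support x)
  rintro _ ⟨m, hm, rfl⟩
  obtain ⟨n, rfl⟩ := hx hm
  rw [map_pow, of_apply]
  exact pow_mem (Algebra.subset_adjoin (Set.mem_singleton _)) n

variable {R S : Type*} [CommSemiring R]

theorem coeff_single_of_mul_of_mul [DecidableEq S] (x : MonoidAlgebra R (FreeMonoid S)) (r : R)
    (a c : S) (w : FreeMonoid S) :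
    (single (FreeMonoid.of a) r * x).coeff (FreeMonoid.of c * w) =
      if c = a then r * x.coeff w else 0 := by
  split_ifs with hca
  · rw [hca, coeff_single_mul_mul]
  · refine coeff_single_mul_of_forall_mul_ne r x fun d h => hca ?_
    exact (List.cons_eq_cons.mp (congrArg FreeMonoid.toList h)).1.symm

theorem support_subset_range_pow_of_commute {a : S} {x : MonoidAlgebra R (FreeMonoid S)}
    (hx : Commute (single (FreeMonoid.of a) (1 : R)) x) :
    (x.coeff.support : Set (FreeMonoid S)) ⊆ Set.range (FreeMonoid.of a ^ ·) := by
  classical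
  have hshift : ∀ c w k, x.coeff (FreeMonoid.of c * w * FreeMonoid.of a ^ k) =
      if c = a then x.coeff (w * FreeMonoid.of a ^ (k + 1)) else 0 := by
    intro c w k
    rw [← mul_one (x.coeff _), ← coeff_mul_single_mul, ← hx.eq, mul_assoc, mul_assoc,
      coeff_single_of_mul_of_mul, one_mul, ← pow_succ]
  suffices ∀ w k, x.coeff (w * FreeMonoid.of a ^ k) ≠ 0 → w ∈ Set.range (FreeMonoid.of a ^ ·) by
    intro w hw
    exact this w 0 (by rwa [pow_zero, mul_one, ← Finsupp.mem_support_iff])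
  intro w
  induction w using FreeMonoid.inductionOn' with
  | one => exact fun _ _ => ⟨0, rfl⟩
  | of_mul c w ih =>
    intro k hk
    rw [hshift] at hk
    split_ifs at hk with hca
    · obtain ⟨n, rfl⟩ := ih (k + 1) hk
      exact ⟨n + 1, by simp only [hca, pow_succ']⟩
    · exact absurd rfl hk

theorem mem_adjoin_single_of_commute {a : S} {x : MonoidAlgebra R (FreeMonoid S)}
    (hx : Commute (single (FreeMonoid.of a) (1 : R)) x) :
    x ∈ Algebra.adjoin R {single (FreeMonoid.of a) (1 : R)} :=
  mem_adjoin_single_of_support_subset_range_pow (support_subset_range_pow_of_commute hx)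

end MonoidAlgebra

namespace TensorAlgebra

variable {R S M : Type*} [CommSemiring R] [AddCommMonoid M] [Module R M]

noncomputable def equivMonoidAlgebraFreeMonoid (b : Module.Basis S R M) :
    TensorAlgebra R M ≃ₐ[R] MonoidAlgebra R (FreeMonoid S) :=
  (equivFreeAlgebra b).trans FreeAlgebra.equivMonoidAlgebraFreeMonoid

theorem equivMonoidAlgebraFreeMonoid_ι_basis (b : Module.Basis S R M) (s : S) :
    equivMonoidAlgebraFreeMonoid b (ι R (b s)) = single (FreeMonoid.of s) 1 := by
  simp [equivMonoidAlgebraFreeMonoid, FreeAlgebra.equivMonoidAlgebraFreeMonoid]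

theorem mem_adjoin_ι_basis_of_commute (b : Module.Basis S R M) {s : S} {x : TensorAlgebra R M}
    (hx : Commute (ι R (b s)) x) : x ∈ Algebra.adjoin R {ι R (b s)} := by
  set e := equivMonoidAlgebraFreeMonoid b
  have hex : e x ∈ Algebra.adjoin R {e (ι R (b s))} := by
    rw [equivMonoidAlgebraFreeMonoid_ι_basis]
    apply MonoidAlgebra.mem_adjoin_single_of_commute
    rw [← equivMonoidAlgebraFreeMonoid_ι_basis b]
    exact hx.map e
  simpa using (Subalgebra.mem_map (f := e.symm.toAlgHom)).2 ⟨_, hex, rfl⟩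

end TensorAlgebra

theorem commutant_of_basis_element_in_tensor_algebra_general (S : Type*) (M : Type*)
    [AddCommGroup M] [Module ℤ M] (b : Module.Basis S ℤ M) (s₀ : S)
    (x : TensorAlgebra ℤ M)
    (hcomm : TensorAlgebra.ι ℤ (b s₀) * x = x * TensorAlgebra.ι ℤ (b s₀)) :
    x ∈ Algebra.adjoin ℤ ({TensorAlgebra.ι ℤ (b s₀)} : Set (TensorAlgebra ℤ M)) :=
  TensorAlgebra.mem_adjoin_ι_basis_of_commute b hcomm

/-- In the tensor algebra on a free ℤ-module `M` with basis indexed by `S` (with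
`|S| ≥ 2`), any element commuting with a fixed basis element `a = b s₀` lies in the
subalgebra generated by `a`. -/
theorem commutant_of_basis_element_in_tensor_algebra (S : Type*) (M : Type*)
    [AddCommGroup M] [Module ℤ M] (b : Module.Basis S ℤ M) (s₀ : S) (hS : ∃ s : S, s ≠ s₀)
    (x : TensorAlgebra ℤ M)
    (hcomm : TensorAlgebra.ι ℤ (b s₀) * x = x * TensorAlgebra.ι ℤ (b s₀)) :
    x ∈ Algebra.adjoin ℤ ({TensorAlgebra.ι ℤ (b s₀)} : Set (TensorAlgebra ℤ M)) :=
  commutant_of_basis_element_in_tensor_algebra_general S M b s₀ x hcomm
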